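/- arXiv:2106.02309 — 2 statements merged into one kernel-verified Lean document; each statement's English description precedes it below -/
import Mathlib

section
/- Let (Z, ≤) be a totally ordered set and let P = {P_1, …, P_m} be a finite partition of Z. Then there exists a finite partition V of Z all of whose elements are convex in (Z, ≤) and entangled (with respect to P). -/
/-- A convex subset of a totally ordered set. -/
def IsConvexSet {Z : Type*} [LinearOrder Z] (C : Set Z) : Prop :=
  ∀ ⦃x y z : Z⦄, x ∈ C → z ∈ C → x ≤ y → y ≤ z → y ∈ C

/-- `𝒫_X`: the elements of the partition `P` meeting `X`. -/
def PartsMeeting {Z : Type*} (P : Set (Set Z)) (X : Set Z) : Set (Set Z) :=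
  {A ∈ P | (A ∩ X).Nonempty}

/-- The infinite string `(p 0 ⋯ p (m-1))^ω` is generated by `X`: there is a monotone
sequence of elements of `X` following the cyclic pattern `p`. -/
def GeneratesOmega {Z : Type*} [LinearOrder Z] (X : Set Z) (m : ℕ) (p : Fin m → Set Z) : Prop :=
  ∃ hm : 0 < m, ∃ x : ℕ → Z, (Monotone x ∨ Antitone x) ∧
    ∀ j : ℕ, x j ∈ X ∧ x j ∈ p ⟨j % m, Nat.mod_lt _ hm⟩

/-- `X` is entangled (with respect to the partition `P`): the set `𝒫_X` of parts meeting `X`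
can be enumerated as `P₁, …, P_m` so that `(P₁ ⋯ P_m)^ω` is generated by `X`. -/
def EntangledSet {Z : Type*} [LinearOrder Z] (P : Set (Set Z)) (X : Set Z) : Prop :=
  ∃ (m : ℕ) (p : Fin m → Set Z), Function.Injective p ∧
    Set.range p = PartsMeeting P X ∧ GeneratesOmega X m p


/-! If every part meeting `X` meets `X` above each point of `X`, then `X` is entangled: cycle
through these finitely many parts while moving upwards; dually for "below". Given a convex `C`,
let `G` be the union of all initial segments of `C` having a finite entangled convex
decomposition. Each part that is not cofinal in `G` lies below some point of `G`; above the
largest of these finitely many points only cofinal parts remain, so `G` itself is decomposable. If `G ≠ C`, the dual argument applied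
to `C \ G` yields a point `y` such that `(C \ G) ∩ Iic y` is entangled, and adding it to `G`
contradicts the maximality of `G`. -/

open Set

section PartsMeeting

variable {Z : Type*} {P : Set (Set Z)} {X Y : Set Z}

theorem partsMeeting_mono (h : X ⊆ Y) : PartsMeeting P X ⊆ PartsMeeting P Y :=
  fun _ hA => ⟨hA.1, hA.2.mono (inter_subset_inter_right _ h)⟩

theorem partsMeeting_nonempty (hcover : ⋃₀ P = univ) (hX : X.Nonempty) :
    (PartsMeeting P X).Nonempty := by
  obtain ⟨x, hx⟩ := hX
  obtain ⟨A, hA, hxA⟩ := mem_sUnion.1 (hcover ▸ mem_univ x)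
  exact ⟨A, hA, x, hxA, hx⟩

end PartsMeeting

theorem exists_monotone_forall_mem {α : Type*} [Preorder α] {s : ℕ → Set α}
    (h0 : (s 0).Nonempty) (hstep : ∀ n, ∀ a ∈ s n, ∃ b ∈ s (n + 1), a ≤ b) :
    ∃ x : ℕ → α, Monotone x ∧ ∀ n, x n ∈ s n := by
  choose f hf hle using hstep
  let g : ∀ n, s n := fun n =>
    Nat.rec ⟨h0.some, h0.some_mem⟩ (fun n a => ⟨f n a a.2, hf n a a.2⟩) n
  exact ⟨fun n => (g n).1, monotone_nat_of_le_succ fun n => hle n _ (g n).2, fun n => (g n).2⟩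

section LinearOrder

variable {Z : Type*} [LinearOrder Z] {P : Set (Set Z)} {X C : Set Z}

theorem isConvexSet_iff_ordConnected : IsConvexSet C ↔ C.OrdConnected :=
  ⟨fun h => ⟨fun _ hx _ hz _ hy => h hx hz hy.1 hy.2⟩,
    fun h _ _ _ hx hz hxy hyz => h.out hx hz ⟨hxy, hyz⟩⟩

theorem EntangledSet.of_orderDual (h : EntangledSet (Z := Zᵒᵈ) P X) : EntangledSet P X := by
  obtain ⟨m, p, hp, hrange, hm, x, hx, hmem⟩ := h
  exact ⟨m, p, hp, hrange, hm, x, hx.symm, hmem⟩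

def PartsCofinal (P : Set (Set Z)) (X : Set Z) : Prop :=
  ∀ A ∈ PartsMeeting P X, ∀ y ∈ X, ∃ d ∈ A ∩ X, y ≤ d

def PartsCoinitial (P : Set (Set Z)) (X : Set Z) : Prop :=
  ∀ A ∈ PartsMeeting P X, ∀ y ∈ X, ∃ d ∈ A ∩ X, d ≤ y

theorem PartsCofinal.inter_of_isUpperSet {U : Set Z} (h : PartsCofinal P X)
    (hU : IsUpperSet U) : PartsCofinal P (X ∩ U) := by
  rintro A hA y ⟨hyX, hyU⟩
  obtain ⟨d, ⟨hdA, hdX⟩, hyd⟩ := h A (partsMeeting_mono inter_subset_left hA) y hyX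
  exact ⟨d, ⟨hdA, hdX, hU hyd hyU⟩, hyd⟩

theorem PartsCofinal.entangledSet (h : PartsCofinal P X) (hfin : (PartsMeeting P X).Finite)
    (hne : (PartsMeeting P X).Nonempty) : EntangledSet P X := by
  obtain ⟨m, p, hrange⟩ := hfin.fin_embedding
  have hm : 0 < m := by
    rcases hne with ⟨A, hA⟩
    obtain ⟨i, -⟩ := hrange ▸ hA
    exact i.pos
  let q : ℕ → Set Z := fun j => p ⟨j % m, Nat.mod_lt _ hm⟩
  have hq : ∀ j, q j ∈ PartsMeeting P X := fun j => hrange ▸ mem_range_self _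
  obtain ⟨x, hmono, hx⟩ := exists_monotone_forall_mem (s := fun j => X ∩ q j)
    ((hq 0).2.mono fun _ h => ⟨h.2, h.1⟩)
    (fun j y hy => (h _ (hq (j + 1)) y hy.1).imp fun _ ⟨hd, hyd⟩ => ⟨⟨hd.2, hd.1⟩, hyd⟩)
  exact ⟨m, p, p.injective, hrange, hm, x, Or.inl hmono, hx⟩

theorem PartsCoinitial.entangledSet (h : PartsCoinitial P X) (hfin : (PartsMeeting P X).Finite)
    (hne : (PartsMeeting P X).Nonempty) : EntangledSet P X :=
  .of_orderDual (PartsCofinal.entangledSet (Z := Zᵒᵈ) h hfin hne)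

theorem exists_partsCofinal_inter_Ici (hX : X.Nonempty) (hfin : (PartsMeeting P X).Finite) :
    ∃ y ∈ X, PartsCofinal P (X ∩ Ici y) := by
  obtain ⟨x₀, hx₀⟩ := hX
  have hbound : ∀ A, ∃ y ∈ X, A ∈ PartsMeeting P X →
      (∀ z ∈ X, ∃ d ∈ A ∩ X, z ≤ d) ∨ ∀ d ∈ A ∩ X, d < y := by
    intro A
    by_cases hcof : ∀ z ∈ X, ∃ d ∈ A ∩ X, z ≤ d
    · exact ⟨x₀, hx₀, fun _ => .inl hcof⟩
    · push Not at hcof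
      obtain ⟨y, hy, hlt⟩ := hcof
      exact ⟨y, hy, fun _ => .inr hlt⟩
  choose b hbX hb using hbound
  rcases (PartsMeeting P X).eq_empty_or_nonempty with hempty | hne
  · refine ⟨x₀, hx₀, fun A hA => ?_⟩
    have := partsMeeting_mono inter_subset_left hA
    simp [hempty] at this
  obtain ⟨A₀, -, hmax⟩ := exists_max_image _ b hfin hne
  refine ⟨b A₀, hbX A₀, fun E hE z hz => ?_⟩
  have hEX : E ∈ PartsMeeting P X := partsMeeting_mono inter_subset_left hE
  obtain ⟨d, hdE, hdX, hyd⟩ := hE.2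
  rcases hb E hEX with hcof | hlt
  · obtain ⟨e, ⟨heE, heX⟩, hze⟩ := hcof z hz.1
    exact ⟨e, ⟨heE, heX, le_trans hz.2 hze⟩, hze⟩
  · exact absurd (hlt d ⟨hdE, hdX⟩) (not_lt.2 ((hmax E hEX).trans hyd))

theorem exists_partsCoinitial_inter_Iic (hX : X.Nonempty) (hfin : (PartsMeeting P X).Finite) :
    ∃ y ∈ X, PartsCoinitial P (X ∩ Iic y) :=
  exists_partsCofinal_inter_Ici (Z := Zᵒᵈ) hX hfin

theorem EntangledSet.nonempty (h : EntangledSet P X) : X.Nonempty := by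
  obtain ⟨_, _, _, _, _, x, _, hx⟩ := h
  exact ⟨x 0, (hx 0).1⟩

def EntangledConvexDecomposable (P : Set (Set Z)) (C : Set Z) : Prop :=
  ∃ V : Set (Set Z), V.Finite ∧ ⋃₀ V = C ∧ V.PairwiseDisjoint id ∧
    ∀ W ∈ V, IsConvexSet W ∧ EntangledSet P W

theorem entangledConvexDecomposable_empty : EntangledConvexDecomposable P ∅ :=
  ⟨∅, finite_empty, sUnion_empty, pairwiseDisjoint_empty, by simp⟩

theorem EntangledSet.entangledConvexDecomposable (hent : EntangledSet P C)
    (hconv : IsConvexSet C) : EntangledConvexDecomposable P C :=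
  ⟨{C}, finite_singleton C, sUnion_singleton C, pairwiseDisjoint_singleton C id, by
    simp [hconv, hent]⟩

theorem EntangledConvexDecomposable.union {C₁ C₂ : Set Z} (h₁ : EntangledConvexDecomposable P C₁)
    (h₂ : EntangledConvexDecomposable P C₂) (hdisj : Disjoint C₁ C₂) :
    EntangledConvexDecomposable P (C₁ ∪ C₂) := by
  obtain ⟨V₁, hfin₁, rfl, hdisj₁, hV₁⟩ := h₁
  obtain ⟨V₂, hfin₂, rfl, hdisj₂, hV₂⟩ := h₂
  refine ⟨V₁ ∪ V₂, hfin₁.union hfin₂, sUnion_union V₁ V₂, ?_, fun W hW => hW.elim (hV₁ W) (hV₂ W)⟩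
  exact hdisj₁.union hdisj₂ fun W₁ hW₁ W₂ hW₂ _ =>
    hdisj.mono (subset_sUnion_of_mem hW₁) (subset_sUnion_of_mem hW₂)

theorem PartsCofinal.entangledConvexDecomposable (hcover : ⋃₀ P = univ) (h : PartsCofinal P X)
    (hconv : X.OrdConnected) (hfin : (PartsMeeting P X).Finite) :
    EntangledConvexDecomposable P X := by
  rcases X.eq_empty_or_nonempty with rfl | hX
  · exact entangledConvexDecomposable_empty
  exact (h.entangledSet hfin (partsMeeting_nonempty hcover hX)).entangledConvexDecomposable
    (isConvexSet_iff_ordConnected.2 hconv)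

section InitialSegments

variable (hcover : ⋃₀ P = univ) (hconv : C.OrdConnected) (hfin : (PartsMeeting P C).Finite)
include hcover hconv hfin

/-- Pick `y ∈ G` above which all parts meeting `G` are cofinal in `G`, and `L ∈ 𝓛` containing `y`:
then `G` is `C ∩ L` plus a final segment of `G` made of cofinal parts only. -/
theorem entangledConvexDecomposable_inter_sUnion {𝓛 : Set (Set Z)}
    (h𝓛 : ∀ L ∈ 𝓛, IsLowerSet L ∧ EntangledConvexDecomposable P (C ∩ L)) :
    EntangledConvexDecomposable P (C ∩ ⋃₀ 𝓛) := by
  set G := C ∩ ⋃₀ 𝓛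
  rcases G.eq_empty_or_nonempty with hG | hG
  · rw [hG]
    exact entangledConvexDecomposable_empty
  obtain ⟨y, ⟨-, L, hL𝓛, hyL⟩, hcof⟩ :=
    exists_partsCofinal_inter_Ici hG (hfin.subset (partsMeeting_mono inter_subset_left))
  obtain ⟨hL, hdecL⟩ := h𝓛 L hL𝓛
  have hsplit : G = C ∩ L ∪ G ∩ Ici y ∩ Lᶜ := by
    ext x
    constructor
    · intro hx
      by_cases hxL : x ∈ L
      · exact .inl ⟨hx.1, hxL⟩
      · exact .inr ⟨⟨hx, le_of_not_ge fun hxy => hxL (hL hxy hyL)⟩, hxL⟩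
    · rintro (⟨hxC, hxL⟩ | ⟨⟨hx, -⟩, -⟩)
      · exact ⟨hxC, L, hL𝓛, hxL⟩
      · exact hx
  have hGconv : G.OrdConnected :=
    hconv.inter (isLowerSet_sUnion fun L hL => (h𝓛 L hL).1).ordConnected
  rw [hsplit]
  refine hdecL.union ((hcof.inter_of_isUpperSet hL.compl).entangledConvexDecomposable hcover
    ((hGconv.inter ordConnected_Ici).inter hL.compl.ordConnected)
    (hfin.subset (partsMeeting_mono fun x hx => hx.1.1.1))) ?_
  exact disjoint_compl_right.mono inter_subset_right inter_subset_right

theorem exists_entangledConvexDecomposable_inter_union_Iic {L : Set Z} (hL : IsLowerSet L)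
    (hdec : EntangledConvexDecomposable P (C ∩ L)) (hCL : (C \ L).Nonempty) :
    ∃ y ∈ C \ L, EntangledConvexDecomposable P (C ∩ (L ∪ Iic y)) := by
  obtain ⟨y, hy, hcoi⟩ :=
    exists_partsCoinitial_inter_Iic hCL (hfin.subset (partsMeeting_mono sdiff_subset))
  have hent : EntangledSet P (C \ L ∩ Iic y) :=
    hcoi.entangledSet (hfin.subset (partsMeeting_mono fun x hx => hx.1.1))
      (partsMeeting_nonempty hcover ⟨y, hy, self_mem_Iic⟩)
  have hconv' : IsConvexSet (C \ L ∩ Iic y) :=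
    isConvexSet_iff_ordConnected.2 ((hconv.inter hL.compl.ordConnected).inter ordConnected_Iic)
  have hsplit : C ∩ (L ∪ Iic y) = C ∩ L ∪ C \ L ∩ Iic y := by
    ext x
    simp only [mem_inter_iff, mem_union, mem_sdiff]
    tauto
  refine ⟨y, hy, hsplit ▸ hdec.union (hent.entangledConvexDecomposable hconv') ?_⟩
  exact disjoint_sdiff_right.mono inter_subset_right inter_subset_left

theorem entangledConvexDecomposable_of_ordConnected : EntangledConvexDecomposable P C := by
  set 𝓛 := {L : Set Z | IsLowerSet L ∧ EntangledConvexDecomposable P (C ∩ L)}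
  have hlower : IsLowerSet (⋃₀ 𝓛) := isLowerSet_sUnion fun L hL => hL.1
  have hdec : EntangledConvexDecomposable P (C ∩ ⋃₀ 𝓛) :=
    entangledConvexDecomposable_inter_sUnion hcover hconv hfin fun _ => id
  have hC : C ⊆ ⋃₀ 𝓛 := by
    by_contra hC
    obtain ⟨y, hy, hdec'⟩ := exists_entangledConvexDecomposable_inter_union_Iic hcover hconv hfin
      hlower hdec (sdiff_nonempty.2 hC)
    exact hy.2 (mem_sUnion_of_mem (.inr self_mem_Iic) ⟨hlower.union (isLowerSet_Iic y), hdec'⟩)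
  rwa [inter_eq_left.2 hC] at hdec

end InitialSegments

end LinearOrder

/-- Every finite partition of a totally ordered set admits a finite entangled convex
decomposition: a finite partition into sets which are convex and entangled. -/
theorem exists_finite_entangled_convex_decomposition {Z : Type*} [LinearOrder Z]
    (P : Set (Set Z)) (hP : Setoid.IsPartition P) (hfin : P.Finite) :
    ∃ V : Set (Set Z), V.Finite ∧ Setoid.IsPartition V ∧
      ∀ W ∈ V, IsConvexSet W ∧ EntangledSet P W := by
  obtain ⟨V, hVfin, hVunion, hVdisj, hV⟩ := entangledConvexDecomposable_of_ordConnected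
    hP.sUnion_eq_univ ordConnected_univ (hfin.subset fun _ hA => hA.1)
  refine ⟨V, hVfin, hVdisj.isPartition_of_exists_of_ne_empty (fun z => ?_) fun h => ?_, hV⟩
  · exact mem_sUnion.1 (hVunion ▸ mem_univ z)
  · exact not_nonempty_empty (hV ∅ h).2.nonempty
end

section
/- Let B be a DFA and let V be a minimum-size e.c. decomposition of B. Then for all α, α' ∈ Pref(L(B)): α ∼_V α' if and only if δ(s,α) = δ(s,α') and the co-lex interval [α, α']^± is contained in a finite union of convex, entangled sets C_1, …, C_n ⊆ Pref(L(B)) with C_i ∩ I_{δ(s,α)} ≠ ∅ for all i = 1, …, n. In particular, the relation ∼_V does not depend on the choice of the minimum-size e.c. decomposition V. -/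
/-- A deterministic finite automaton with a (possibly partial) transition function,
a unique initial state and a set of final states. -/
structure PDFA (α : Type*) (σ : Type*) where
  step : σ → α → Option σ
  start : σ
  accept : Set σ

namespace PDFA

variable {α : Type*} {σ : Type*}

/-- The transition function extended to strings (read left to right). -/
def evalFrom (M : PDFA α σ) : σ → List α → Option σ
  | q, [] => some q
  | q, a :: w =>
    match M.step q a with
    | none => none
    | some q' => M.evalFrom q' w

/-- `δ(s, w)`. -/
def eval (M : PDFA α σ) (w : List α) : Option σ :=
  M.evalFrom M.start w

/-- The language accepted by the automaton. -/
def language (M : PDFA α σ) : Set (List α) :=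
  {w | ∃ q, M.eval w = some q ∧ q ∈ M.accept}

/-- `Pref(L(M))`: the set of prefixes of accepted words. -/
def prefLang (M : PDFA α σ) : Set (List α) :=
  {w | ∃ v, w ++ v ∈ M.language}

/-- `I_q`: the words of `Pref(L(M))` reaching state `q`. -/
def I (M : PDFA α σ) (q : σ) : Set (List α) :=
  {w | w ∈ M.prefLang ∧ M.eval w = some q}

/-- Every state is reachable from the initial state, and from every state a final
state can be reached. -/
def Trim (M : PDFA α σ) : Prop :=
  (∀ q : σ, ∃ w : List α, M.eval w = some q) ∧
  (∀ q : σ, ∃ w : List α, ∃ q' : σ, M.evalFrom q w = some q' ∧ q' ∈ M.accept)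

variable [LinearOrder α]

/-- A sequence of words which is monotone (non-decreasing or non-increasing) in the
co-lexicographic order (i.e., lexicographic order of the reversed words). -/
def MonotoneColex (x : ℕ → List α) : Prop :=
  (∀ i j : ℕ, i ≤ j → (x i).reverse ≤ (x j).reverse) ∨
  (∀ i j : ℕ, i ≤ j → (x j).reverse ≤ (x i).reverse)

/-- A set of states is entangled if a single monotone sequence of words of
`Pref(L(M))` reaches each of its states infinitely many times. -/
def EntangledStates (M : PDFA α σ) (S : Set σ) : Prop :=
  ∃ x : ℕ → List α, (∀ i, x i ∈ M.prefLang) ∧ MonotoneColex x ∧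
    ∀ q ∈ S, ∀ n : ℕ, ∃ i : ℕ, n ≤ i ∧ M.eval (x i) = some q

/-- `ent(M)`: the maximum cardinality of an entangled set of states. -/
noncomputable def ent (M : PDFA α σ) [Fintype σ] : ℕ :=
  sSup {n : ℕ | ∃ S : Finset σ, S.card = n ∧ M.EntangledStates ↑S}

/-- The strict co-lex partial order on states: `q₁ ≺ q₂` iff `q₁ ≠ q₂` and every word
reaching `q₁` is co-lexicographically smaller than every word reaching `q₂`. -/
def stateLt (M : PDFA α σ) (q₁ q₂ : σ) : Prop :=
  q₁ ≠ q₂ ∧ ∀ u ∈ M.I q₁, ∀ v ∈ M.I q₂, u.reverse < v.reverse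

/-- A set of states which is an antichain for the co-lex partial order. -/
def IsColexAntichain (M : PDFA α σ) (S : Set σ) : Prop :=
  ∀ q₁ ∈ S, ∀ q₂ ∈ S, q₁ ≠ q₂ → ¬ M.stateLt q₁ q₂ ∧ ¬ M.stateLt q₂ q₁

/-- `width(M)`: the maximum cardinality of a co-lex antichain of states. -/
noncomputable def width (M : PDFA α σ) [Fintype σ] : ℕ :=
  sSup {n : ℕ | ∃ S : Finset σ, S.card = n ∧ M.IsColexAntichain ↑S}

/-- `V` is convex in `(Pref(L(M)), ⪯)`. -/
def ConvexIn (M : PDFA α σ) (V : Set (List α)) : Prop :=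
  ∀ ⦃u v w : List α⦄, u ∈ V → w ∈ V → v ∈ M.prefLang →
    u.reverse ≤ v.reverse → v.reverse ≤ w.reverse → v ∈ V

/-- A set of words `V` is entangled in `M` if some monotone sequence of elements of `V`
passes through each state occurring in `V` infinitely many times. -/
def EntangledWords (M : PDFA α σ) (V : Set (List α)) : Prop :=
  ∃ x : ℕ → List α, (∀ i, x i ∈ V) ∧ MonotoneColex x ∧
    ∀ q : σ, (∃ w ∈ V, M.eval w = some q) →
      ∀ n : ℕ, ∃ i : ℕ, n ≤ i ∧ M.eval (x i) = some q

/-- An entangled convex (e.c.) decomposition of `M`: a partition of `Pref(L(M))` into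
convex, entangled sets. -/
def IsECD (M : PDFA α σ) (V : Set (Set (List α))) : Prop :=
  (⋃₀ V) = M.prefLang ∧ V.Pairwise Disjoint ∧
    ∀ W ∈ V, M.ConvexIn W ∧ M.EntangledWords W

/-- A minimum-size e.c. decomposition: a finite e.c. decomposition of minimum cardinality. -/
def IsMinECD (M : PDFA α σ) (V : Set (Set (List α))) : Prop :=
  V.Finite ∧ M.IsECD V ∧
    ∀ V' : Set (Set (List α)), V'.Finite → M.IsECD V' → V.ncard ≤ V'.ncard

/-- The equivalence relation `∼_𝒱`: two words are equivalent iff they reach the same state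
and every element of `𝒱` lying strictly co-lexicographically between them intersects `I_q`. -/
def simV (M : PDFA α σ) (V : Set (Set (List α))) (u v : List α) : Prop :=
  M.eval u = M.eval v ∧
  ∀ W ∈ V,
    (∀ w ∈ W, min u.reverse v.reverse < w.reverse ∧ w.reverse < max u.reverse v.reverse) →
    ∃ w ∈ W, M.eval w = M.eval u

/-- The decomposition-free characterization of `∼`: the two words reach the same state and
the co-lex interval between them is covered by finitely many convex sets, each entangled in
`M` and intersecting `I_q`. -/
def simR (M : PDFA α σ) (u v : List α) : Prop :=
  M.eval u = M.eval v ∧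
  ∃ (n : ℕ) (C : Fin n → Set (List α)),
    (∀ i, C i ⊆ M.prefLang ∧ M.ConvexIn (C i) ∧ M.EntangledWords (C i) ∧
      ∃ w ∈ C i, M.eval w = M.eval u) ∧
    ∀ w ∈ M.prefLang,
      min u.reverse v.reverse ≤ w.reverse → w.reverse ≤ max u.reverse v.reverse →
      w ∈ ⋃ i, C i

end PDFA

/-!
Let `q = δ(s, α)`. If `α ∼_𝒱 α'`, the parts of `𝒱` meeting `[α, α']^±` cover it, and by
convexity each of them either lies strictly inside the interval or contains `α` or `α'`;
either way it meets `I_q`.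

Conversely, let `W ∈ 𝒱` lie strictly inside `[α, α']^±`, which is covered by `C₁, …, Cₙ`.
A monotone sequence witnessing that `W` is entangled has, by pigeonhole and convexity, a tail
inside one `Cᵢ`, and a tail of the sequence witnessing that `Cᵢ` is entangled lies in one part
`P ∈ 𝒱`; so the states of `W` occur in `Cᵢ`, and those of `Cᵢ` (among them `q`) occur in `P`.
If `P ≠ W`, the co-lex hull of `W ∪ P` is a union of parts, all of them except `W` and `P`
inside `Cᵢ`, so the sequence witnessing that `P` is entangled also shows that the hull is
entangled. Merging these parts into their union gives a smaller e.c. decomposition.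
-/

namespace PDFA

variable {α σ : Type*} (M : PDFA α σ)

theorem evalFrom_append (q : σ) (u w : List α) :
    M.evalFrom q (u ++ w) = (M.evalFrom q u).bind (M.evalFrom · w) := by
  induction u generalizing q with
  | nil => rfl
  | cons a u ih =>
    simp only [List.cons_append, evalFrom]
    cases M.step q a with
    | none => rfl
    | some q' => exact ih q'

theorem exists_eval_eq_some {w : List α} (hw : w ∈ M.prefLang) : ∃ q, M.eval w = some q := by
  obtain ⟨v, q, hq, -⟩ := hw
  rw [eval, evalFrom_append] at hq
  cases h : M.evalFrom M.start w with
  | none => rw [h] at hq; cases hq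
  | some p => exact ⟨p, h⟩

def reach (S : Set (List α)) : Set σ :=
  {q | ∃ w ∈ S, M.eval w = some q}

theorem reach_mono {S T : Set (List α)} (h : S ⊆ T) : M.reach S ⊆ M.reach T :=
  fun _ ⟨w, hw, hq⟩ => ⟨w, h hw, hq⟩

theorem reach_union (S T : Set (List α)) : M.reach (S ∪ T) = M.reach S ∪ M.reach T := by
  ext q
  simp only [reach, Set.mem_union, Set.mem_ofPred_eq, or_and_right, exists_or]

variable [LinearOrder α] {M} {V : Set (Set (List α))}

theorem IsECD.exists_mem (hV : M.IsECD V) {w : List α} (hw : w ∈ M.prefLang) :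
    ∃ R ∈ V, w ∈ R := by
  rwa [← hV.1] at hw

theorem IsECD.subset_prefLang (hV : M.IsECD V) {R : Set (List α)} (hR : R ∈ V) :
    R ⊆ M.prefLang :=
  hV.1 ▸ Set.subset_sUnion_of_mem hR

theorem IsECD.convexIn (hV : M.IsECD V) {R : Set (List α)} (hR : R ∈ V) : M.ConvexIn R :=
  (hV.2.2 R hR).1

theorem IsECD.entangledWords (hV : M.IsECD V) {R : Set (List α)} (hR : R ∈ V) :
    M.EntangledWords R :=
  (hV.2.2 R hR).2

theorem IsECD.eq_of_mem_of_mem (hV : M.IsECD V) {R R' : Set (List α)} (hR : R ∈ V)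
    (hR' : R' ∈ V) {w : List α} (hw : w ∈ R) (hw' : w ∈ R') : R = R' := by
  by_contra hne
  exact Set.disjoint_left.mp (hV.2.1 hR hR' hne) hw hw'

theorem IsECD.merge (hV : M.IsECD V) {J : Set (Set (List α))} (hJ : J ⊆ V)
    (hconv : M.ConvexIn (⋃₀ J)) (hent : M.EntangledWords (⋃₀ J)) :
    M.IsECD (insert (⋃₀ J) (V \ J)) := by
  obtain ⟨hun, hdis, hmem⟩ := hV
  refine ⟨?_, ?_, ?_⟩
  · rw [Set.sUnion_insert, ← Set.sUnion_union, Set.union_sdiff_cancel hJ, hun]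
  · refine (hdis.mono Set.sdiff_subset).insert fun R hR _ => ?_
    have hdisj : Disjoint (⋃₀ J) R := Set.disjoint_sUnion_left.mpr fun R' hR' =>
      hdis (hJ hR') hR.1 fun h => hR.2 (h ▸ hR')
    exact ⟨hdisj, hdisj.symm⟩
  · exact Set.forall_mem_insert.mpr ⟨⟨hconv, hent⟩, fun R hR => hmem R hR.1⟩

theorem IsMinECD.finite (hV : M.IsMinECD V) : V.Finite :=
  hV.1

theorem IsMinECD.isECD (hV : M.IsMinECD V) : M.IsECD V :=
  hV.2.1

theorem IsMinECD.subsingleton_of_merge (hV : M.IsMinECD V) {J : Set (Set (List α))}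
    (hJ : J ⊆ V) (hconv : M.ConvexIn (⋃₀ J)) (hent : M.EntangledWords (⋃₀ J)) :
    J.Subsingleton := by
  obtain ⟨hfin, hV, hmin⟩ := hV
  by_contra hJ1
  have : Finite J := (hfin.subset hJ).to_subtype
  have hJcard : 1 < J.ncard :=
    Set.one_lt_ncard_iff_nontrivial.mpr (Set.not_subsingleton_iff.mp hJ1)
  have hle := hmin _ (hfin.sdiff.insert _) (hV.merge hJ hconv hent)
  have hins := Set.ncard_insert_le (⋃₀ J) (V \ J)
  have hdiff := Set.ncard_sdiff hJ (hfin.subset hJ)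
  have hJV := Set.ncard_le_ncard hJ hfin
  omega

theorem MonotoneColex.exists_eventually_mem {x : ℕ → List α} (hx : MonotoneColex x)
    (hxM : ∀ t, x t ∈ M.prefLang) {ι : Type*} [Finite ι] {C : ι → Set (List α)}
    (hC : ∀ i, M.ConvexIn (C i)) (hcov : ∀ t, x t ∈ ⋃ i, C i) :
    ∃ i T, ∀ t, T ≤ t → x t ∈ C i := by
  choose g hg using fun t => Set.mem_iUnion.mp (hcov t)
  obtain ⟨i, hi⟩ := Finite.exists_infinite_fiber g
  have hinf : (g ⁻¹' {i}).Infinite := Set.infinite_coe_iff.mp hi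
  obtain ⟨t₀, ht₀ : g t₀ = i⟩ := hinf.nonempty
  refine ⟨i, t₀, fun t ht => ?_⟩
  obtain ⟨t₁, ht₁ : g t₁ = i, htt₁⟩ := hinf.exists_gt t
  have h₀ := ht₀ ▸ hg t₀
  have h₁ := ht₁ ▸ hg t₁
  rcases hx with h | h
  · exact hC i h₀ h₁ (hxM t) (h t₀ t ht) (h t t₁ htt₁.le)
  · exact hC i h₁ h₀ (hxM t) (h t t₁ htt₁.le) (h t₀ t ht)

theorem EntangledWords.exists_reach_subset {W : Set (List α)} (hW : M.EntangledWords W)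
    (hWM : W ⊆ M.prefLang) {ι : Type*} [Finite ι] {C : ι → Set (List α)}
    (hC : ∀ i, M.ConvexIn (C i)) (hcov : W ⊆ ⋃ i, C i) :
    ∃ i, (W ∩ C i).Nonempty ∧ M.reach W ⊆ M.reach (C i) := by
  obtain ⟨x, hxW, hx, hhit⟩ := hW
  obtain ⟨i, T, hT⟩ := hx.exists_eventually_mem (fun t => hWM (hxW t)) hC fun t => hcov (hxW t)
  refine ⟨i, ⟨x T, hxW T, hT T le_rfl⟩, fun q hq => ?_⟩
  obtain ⟨t, hTt, hxt⟩ := hhit q hq T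
  exact ⟨x t, hT t hTt, hxt⟩

theorem EntangledWords.of_reach_subset {P H : Set (List α)} (hP : M.EntangledWords P)
    (hPH : P ⊆ H) (hreach : M.reach H ⊆ M.reach P) : M.EntangledWords H :=
  let ⟨x, hxP, hx, hhit⟩ := hP
  ⟨x, fun t => hPH (hxP t), hx, fun q hq => hhit q (hreach hq)⟩

variable (M) in
def colexHull (S : Set (List α)) : Set (List α) :=
  {w | w ∈ M.prefLang ∧ (∃ a ∈ S, a.reverse ≤ w.reverse) ∧ ∃ b ∈ S, w.reverse ≤ b.reverse}

theorem convexIn_colexHull (S : Set (List α)) : M.ConvexIn (M.colexHull S) :=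
  fun _ _ _ ⟨_, ⟨a, haS, ha⟩, _⟩ ⟨_, _, ⟨b, hbS, hb⟩⟩ hv h₁ h₂ =>
    ⟨hv, ⟨a, haS, ha.trans h₁⟩, ⟨b, hbS, h₂.trans hb⟩⟩

theorem subset_colexHull {S : Set (List α)} (hS : S ⊆ M.prefLang) : S ⊆ M.colexHull S :=
  fun w hw => ⟨hS hw, ⟨w, hw, le_rfl⟩, ⟨w, hw, le_rfl⟩⟩

theorem IsECD.subset_colexHull_sUnion (hV : M.IsECD V) {K : Set (Set (List α))} (hK : K ⊆ V)
    {R : Set (List α)} (hR : R ∈ V) (hRK : (R ∩ M.colexHull (⋃₀ K)).Nonempty) :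
    R ⊆ M.colexHull (⋃₀ K) := by
  obtain ⟨w, hwR, -, ⟨a, haK, haw⟩, ⟨b, hbK, hwb⟩⟩ := hRK
  have hKM : ⋃₀ K ⊆ M.prefLang := hV.1 ▸ Set.sUnion_mono hK
  have hRsub : ∀ c ∈ ⋃₀ K, c ∈ R → R ⊆ ⋃₀ K := fun c ⟨R', hR'K, hcR'⟩ hcR =>
    hV.eq_of_mem_of_mem hR (hK hR'K) hcR hcR' ▸ Set.subset_sUnion_of_mem hR'K
  intro r hr
  refine ⟨hV.subset_prefLang hR hr, ?_, ?_⟩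
  · by_cases h : a.reverse ≤ r.reverse
    · exact ⟨a, haK, h⟩
    · have haR := hV.convexIn hR hr hwR (hKM haK) (not_le.mp h).le haw
      exact ⟨r, hRsub a haK haR hr, le_rfl⟩
  · by_cases h : r.reverse ≤ b.reverse
    · exact ⟨b, hbK, h⟩
    · have hbR := hV.convexIn hR hwR hr (hKM hbK) hwb (not_le.mp h).le
      exact ⟨r, hRsub b hbK hbR hr, le_rfl⟩

/-- A word of the hull lying in neither `W` nor `P` lies between `a` and `b`. -/
theorem colexHull_union_subset {W P C : Set (List α)} (hW : M.ConvexIn W) (hP : M.ConvexIn P)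
    (hC : M.ConvexIn C) {a b : List α} (ha : a ∈ W ∩ C) (hb : b ∈ C ∩ P) :
    M.colexHull (W ∪ P) ⊆ W ∪ P ∪ C := by
  rintro r ⟨hr, ⟨a', ha', ha'r⟩, ⟨b', hb', hrb'⟩⟩
  by_contra hout
  simp only [Set.mem_union, not_or] at hout
  obtain ⟨⟨hrW, hrP⟩, hrC⟩ := hout
  have hlow : a.reverse ≤ r.reverse ∨ b.reverse ≤ r.reverse := by
    by_contra! h
    rcases ha' with ha' | ha'
    · exact hrW (hW ha' ha.1 hr ha'r h.1.le)
    · exact hrP (hP ha' hb.2 hr ha'r h.2.le)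
  have hup : r.reverse ≤ a.reverse ∨ r.reverse ≤ b.reverse := by
    by_contra! h
    rcases hb' with hb' | hb'
    · exact hrW (hW ha.1 hb' hr h.1.le hrb')
    · exact hrP (hP hb.2 hb' hr h.2.le hrb')
  apply hrC
  rcases hlow with h₁ | h₁ <;> rcases hup with h₂ | h₂
  exacts [hC ha.2 ha.2 hr h₁ h₂, hC ha.2 hb.1 hr h₁ h₂, hC hb.1 ha.2 hr h₁ h₂,
    hC hb.1 hb.1 hr h₁ h₂]

theorem IsMinECD.eq_of_reach_subset (hV : M.IsMinECD V) {W P C : Set (List α)} (hW : W ∈ V)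
    (hP : P ∈ V) (hC : M.ConvexIn C) (hWC : (W ∩ C).Nonempty) (hCP : (C ∩ P).Nonempty)
    (hWC_reach : M.reach W ⊆ M.reach C) (hCP_reach : M.reach C ⊆ M.reach P) : W = P := by
  have hV' := hV.isECD
  obtain ⟨a, ha⟩ := hWC
  obtain ⟨b, hb⟩ := hCP
  set H := M.colexHull (W ∪ P)
  have hK : {W, P} ⊆ V := Set.insert_subset hW (Set.singleton_subset_iff.mpr hP)
  have hWPH : W ∪ P ⊆ H :=
    subset_colexHull (Set.union_subset (hV'.subset_prefLang hW) (hV'.subset_prefLang hP))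
  set J := {R ∈ V | (R ∩ H).Nonempty}
  have hJ : ⋃₀ J = H := by
    refine subset_antisymm (Set.sUnion_subset fun R ⟨hRV, hRH⟩ => ?_) fun w hw => ?_
    · have hsat := hV'.subset_colexHull_sUnion hK hRV
      rw [Set.sUnion_pair] at hsat
      exact hsat hRH
    · obtain ⟨R, hRV, hwR⟩ := hV'.exists_mem hw.1
      exact ⟨R, ⟨hRV, w, hwR, hw⟩, hwR⟩
  have hreach : M.reach H ⊆ M.reach P :=
    calc M.reach H ⊆ M.reach (W ∪ P ∪ C) :=
          reach_mono M (colexHull_union_subset (hV'.convexIn hW) (hV'.convexIn hP) hC ha hb)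
      _ = M.reach W ∪ M.reach P ∪ M.reach C := by simp only [reach_union]
      _ ⊆ M.reach P := Set.union_subset (Set.union_subset (hWC_reach.trans hCP_reach) le_rfl)
          hCP_reach
  have hent : M.EntangledWords H :=
    (hV'.entangledWords hP).of_reach_subset (Set.subset_union_right.trans hWPH) hreach
  exact hV.subsingleton_of_merge (J := J) (fun R hR => hR.1) (hJ ▸ convexIn_colexHull _)
    (hJ ▸ hent) ⟨hW, a, ha.1, hWPH (Or.inl ha.1)⟩ ⟨hP, b, hb.2, hWPH (Or.inr hb.2)⟩

theorem ConvexIn.mem_or_mem_of_not_forall_lt {W : Set (List α)} (hW : M.ConvexIn W)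
    {u v w : List α} (hu : u ∈ M.prefLang) (hv : v ∈ M.prefLang) (hw : w ∈ W)
    (h₁ : min u.reverse v.reverse ≤ w.reverse) (h₂ : w.reverse ≤ max u.reverse v.reverse)
    (hout : ¬ ∀ w ∈ W, min u.reverse v.reverse < w.reverse ∧
      w.reverse < max u.reverse v.reverse) :
    u ∈ W ∨ v ∈ W := by
  push Not at hout
  obtain ⟨w', hw', hw'out⟩ := hout
  rcases le_or_gt w'.reverse (min u.reverse v.reverse) with hlo | hlo
  · rcases min_choice u.reverse v.reverse with hm | hm <;> rw [hm] at hlo h₁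
    exacts [Or.inl (hW hw' hw hu hlo h₁), Or.inr (hW hw' hw hv hlo h₁)]
  · have hhi := hw'out hlo
    rcases max_choice u.reverse v.reverse with hm | hm <;> rw [hm] at hhi h₂
    exacts [Or.inl (hW hw hw' hu h₂ hhi), Or.inr (hW hw hw' hv h₂ hhi)]

theorem simR_of_simV (hV : M.IsECD V) (hfin : V.Finite) {u v : List α} (hu : u ∈ M.prefLang)
    (hv : v ∈ M.prefLang) (h : M.simV V u v) : M.simR u v := by
  obtain ⟨heval, hmeet⟩ := h
  set K := {W ∈ V | ∃ w ∈ W, min u.reverse v.reverse ≤ w.reverse ∧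
    w.reverse ≤ max u.reverse v.reverse}
  have hKfin : K.Finite := hfin.subset (Set.sep_subset _ _)
  obtain ⟨n, f, hf⟩ := hKfin.fin_embedding
  refine ⟨heval, n, fun i => f i, fun i => ?_, fun w hw h₁ h₂ => ?_⟩
  · obtain ⟨hWV, w, hw, h₁, h₂⟩ : f i ∈ K := hf ▸ Set.mem_range_self i
    refine ⟨hV.subset_prefLang hWV, hV.convexIn hWV, hV.entangledWords hWV, ?_⟩
    by_cases hin : ∀ w ∈ f i, min u.reverse v.reverse < w.reverse ∧
        w.reverse < max u.reverse v.reverse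
    · exact hmeet _ hWV hin
    · rcases (hV.convexIn hWV).mem_or_mem_of_not_forall_lt hu hv hw h₁ h₂ hin with hu' | hv'
      exacts [⟨u, hu', rfl⟩, ⟨v, hv', heval.symm⟩]
  · obtain ⟨R, hR, hwR⟩ := hV.exists_mem hw
    obtain ⟨i, rfl⟩ : R ∈ Set.range f := hf ▸ ⟨hR, w, hwR, h₁, h₂⟩
    exact Set.mem_iUnion.mpr ⟨i, hwR⟩

theorem simV_of_simR (hV : M.IsMinECD V) {u v : List α} (h : M.simR u v) : M.simV V u v := by
  have hV' := hV.isECD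
  obtain ⟨heval, n, C, hC, hcov⟩ := h
  refine ⟨heval, fun W hW hstrict => ?_⟩
  have hWM := hV'.subset_prefLang hW
  obtain ⟨i, hWC, hWC_reach⟩ := (hV'.entangledWords hW).exists_reach_subset hWM
    (fun i => (hC i).2.1) fun w hw => hcov w (hWM hw) (hstrict w hw).1.le (hstrict w hw).2.le
  obtain ⟨hCM, hCconv, hCent, w, hwC, hwu⟩ := hC i
  have : Finite V := hV.finite.to_subtype
  obtain ⟨⟨P, hP⟩, hCP, hCP_reach⟩ := hCent.exists_reach_subset hCM
    (C := fun R : V => (R : Set (List α))) (fun R => hV'.convexIn R.2)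
    (Set.sUnion_eq_iUnion ▸ hV'.1 ▸ hCM)
  have hWP : W = P := hV.eq_of_reach_subset hW hP hCconv hWC hCP hWC_reach hCP_reach
  obtain ⟨q, hq⟩ := M.exists_eval_eq_some (hCM hwC)
  obtain ⟨w', hw', hw'q⟩ := hCP_reach ⟨w, hwC, hq⟩
  exact ⟨w', hWP ▸ hw', hw'q.trans (hq.symm.trans hwu)⟩

end PDFA

theorem simV_iff_simR_general {α σ : Type*} [LinearOrder α]
    (M : PDFA α σ)
    (V : Set (Set (List α))) (hV : M.IsMinECD V)
    (u v : List α) (hu : u ∈ M.prefLang) (hv : v ∈ M.prefLang) :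
    (M.simV V u v ↔ M.simR u v) ∧
    (∀ V' : Set (Set (List α)), M.IsMinECD V' → (M.simV V u v ↔ M.simV V' u v)) := by
  have key : ∀ V, M.IsMinECD V → (M.simV V u v ↔ M.simR u v) := fun V hV =>
    ⟨PDFA.simR_of_simV hV.isECD hV.finite hu hv, PDFA.simV_of_simR hV⟩
  exact ⟨key V hV, fun V' hV' => (key V hV).trans (key V' hV').symm⟩

/-- Lemma: decomposition-free characterization of `∼_V` for a minimum-size e.c.
decomposition `V`: `α ∼_V α'` iff the two words reach the same state and the co-lex
interval between them is covered by finitely many convex sets, each entangled in `M` and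
meeting `I_{δ(s,α)}`. In particular `∼_V` does not depend on the choice of `V`. -/
theorem simV_iff_simR {α σ : Type*} [LinearOrder α] [Fintype σ]
    (M : PDFA α σ) (hM : M.Trim)
    (V : Set (Set (List α))) (hV : M.IsMinECD V)
    (u v : List α) (hu : u ∈ M.prefLang) (hv : v ∈ M.prefLang) :
    (M.simV V u v ↔ M.simR u v) ∧
    (∀ V' : Set (Set (List α)), M.IsMinECD V' → (M.simV V u v ↔ M.simV V' u v)) :=
  simV_iff_simR_general M V hV u v hu hv
end
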